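/- If q₁ = 1 and q₂ = ⋯ = q_m = 2, then any constant C satisfying Σ_{j₁=1}^{n}(Σ_{j₂,...,j_m=1}^{n}|T(e_{j₁},...,e_{j_m})|²)^{1/2} ≤ C‖T‖ for all real m-linear forms T on (ℓ∞ⁿ)^m and all n satisfies C ≥ 2^{(m-1)/2}. -/

import Mathlib

/-- The canonical basis vectors of `ℝⁿ`. -/
def e (n : ℕ) (j : Fin n) : Fin n → ℝ := fun i => if i = j then 1 else 0

/-- The supremum norm of an `m`-linear form on `(ℓ∞ⁿ)^m`. -/
noncomputable def supNorm (m n : ℕ)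
    (T : MultilinearMap ℝ (fun _ : Fin m => (Fin n → ℝ)) ℝ) : ℝ :=
  sSup {v : ℝ | ∃ x : Fin m → Fin n → ℝ, (∀ i, ‖x i‖ ≤ 1) ∧ v = |T x|}

/-!
Test the inequality on the form
`T(x₀, …, x_p) = Σ_{u ∈ {0,1}^p} x₀(u) ∏ₖ (xₖ(a) + (-1)^{uₖ} xₖ(b))` on `ℓ∞^{2^p}`, with `p = m - 1`,
whose coefficients `T(e_u, e_v) = (-1)^{u·v}` (for `v ∈ {a,b}^p`) are the entries of a
Sylvester–Hadamard matrix. For each `u` the inner `ℓ₂`-sum is `2^p`, so the mixed sum is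
`2^p · 2^{p/2}`. On the other hand, expanding the sum over `u` as a product gives
`|T(x)| ≤ ∏ₖ (|xₖ(a) + xₖ(b)| + |xₖ(a) - xₖ(b)|) ≤ 2^p` on the unit balls, so `‖T‖ ≤ 2^p`.
-/

open Finset

section SumProdForm

variable {n p : ℕ}

noncomputable def sumProdForm (φ : Fin n → Fin p → (Fin n → ℝ) →ₗ[ℝ] ℝ) :
    MultilinearMap ℝ (fun _ : Fin (p + 1) => Fin n → ℝ) ℝ :=
  ∑ j, (MultilinearMap.mkPiAlgebra ℝ (Fin (p + 1)) ℝ).compLinearMap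
    (Fin.cons (α := fun _ => (Fin n → ℝ) →ₗ[ℝ] ℝ) (LinearMap.proj j) (φ j))

variable (φ : Fin n → Fin p → (Fin n → ℝ) →ₗ[ℝ] ℝ)

theorem sumProdForm_apply (x : Fin (p + 1) → Fin n → ℝ) :
    sumProdForm φ x = ∑ j, x 0 j * ∏ k, φ j k (x k.succ) := by
  simp only [sumProdForm, _root_.sum_apply, MultilinearMap.compLinearMap_apply,
    MultilinearMap.mkPiAlgebra_apply, Fin.prod_univ_succ, Fin.cons_zero, Fin.cons_succ,
    LinearMap.coe_proj, Function.eval]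

theorem sumProdForm_apply_e (j₁ : Fin n) (idx : Fin p → Fin n) :
    sumProdForm φ (fun k => e n (Fin.cons (α := fun _ => Fin n) j₁ idx k)) =
      ∏ k, φ j₁ k (e n (idx k)) := by
  simp [sumProdForm_apply, e]

theorem sum_sq_sumProdForm_apply_e (j₁ : Fin n) :
    ∑ idx : Fin p → Fin n,
        |sumProdForm φ (fun k => e n (Fin.cons (α := fun _ => Fin n) j₁ idx k))| ^ 2 =
      ∏ k, ∑ i, φ j₁ k (e n i) ^ 2 := by
  simp only [sumProdForm_apply_e, sq_abs, ← prod_pow, Fintype.prod_sum]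

theorem abs_sumProdForm_le {x : Fin (p + 1) → Fin n → ℝ} (hx : ‖x 0‖ ≤ 1) :
    |sumProdForm φ x| ≤ ∑ j, ∏ k, |φ j k (x k.succ)| := by
  rw [sumProdForm_apply]
  refine (abs_sum_le_sum_abs _ _).trans (sum_le_sum fun j _ => ?_)
  rw [abs_mul, abs_prod]
  exact mul_le_of_le_one_left (by positivity) ((norm_le_pi_norm (x 0) j).trans hx)

end SumProdForm

section SupNorm

variable {m n : ℕ} {T : MultilinearMap ℝ (fun _ : Fin m => (Fin n → ℝ)) ℝ}

theorem supNorm_nonneg : 0 ≤ supNorm m n T :=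
  Real.sSup_nonneg (by rintro _ ⟨x, -, rfl⟩; exact abs_nonneg _)

theorem supNorm_le {B : ℝ} (hB : ∀ x : Fin m → Fin n → ℝ, (∀ i, ‖x i‖ ≤ 1) → |T x| ≤ B) :
    supNorm m n T ≤ B :=
  csSup_le ⟨_, 0, fun i => by simp, rfl⟩ (by rintro _ ⟨x, hx, rfl⟩; exact hB x hx)

end SupNorm

theorem abs_add_add_abs_sub_le_two {a b : ℝ} (ha : |a| ≤ 1) (hb : |b| ≤ 1) :
    |a + b| + |a - b| ≤ 2 := by
  rcases abs_le.1 ha with ⟨_, _⟩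
  rcases abs_le.1 hb with ⟨_, _⟩
  rcases abs_cases (a + b) with ⟨_, _⟩ | ⟨_, _⟩ <;>
    rcases abs_cases (a - b) with ⟨_, _⟩ | ⟨_, _⟩ <;> linarith

theorem sum_sq_e_apply_add_mul_e_apply {a b : Fin n} (hab : a ≠ b) (s : ℝ) :
    ∑ i, (e n i a + s * e n i b) ^ 2 = 1 + s ^ 2 := by
  simp [e, add_sq, sum_add_distrib, hab]

noncomputable def hadamardForm (p : ℕ) (a b : Fin (2 ^ p)) :
    MultilinearMap ℝ (fun _ : Fin (p + 1) => Fin (2 ^ p) → ℝ) ℝ :=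
  sumProdForm fun j k =>
    LinearMap.proj a + (-1 : ℝ) ^ (finFunctionFinEquiv.symm j k : ℕ) • LinearMap.proj b

theorem abs_hadamardForm_le {p : ℕ} (a b : Fin (2 ^ p)) {x : Fin (p + 1) → Fin (2 ^ p) → ℝ}
    (hx : ∀ i, ‖x i‖ ≤ 1) : |hadamardForm p a b x| ≤ 2 ^ p := by
  have hxk : ∀ k j, |x k j| ≤ 1 := fun k j => (norm_le_pi_norm (x k) j).trans (hx k)
  calc |hadamardForm p a b x|
      ≤ ∑ j : Fin (2 ^ p), ∏ k,
          |x k.succ a + (-1) ^ (finFunctionFinEquiv.symm j k : ℕ) * x k.succ b| :=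
        abs_sumProdForm_le _ (hx 0)
    _ = ∑ u : Fin p → Fin 2, ∏ k, |x k.succ a + (-1) ^ (u k : ℕ) * x k.succ b| :=
        finFunctionFinEquiv.symm.sum_comp fun u : Fin p → Fin 2 =>
          ∏ k, |x k.succ a + (-1) ^ (u k : ℕ) * x k.succ b|
    _ = ∏ k : Fin p, ∑ c : Fin 2, |x k.succ a + (-1) ^ (c : ℕ) * x k.succ b| := by
        rw [Fintype.prod_sum]
    _ ≤ ∏ _k : Fin p, (2 : ℝ) := by
        gcongr with k
        simpa [Fin.sum_univ_two, sub_eq_add_neg] using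
          abs_add_add_abs_sub_le_two (hxk k.succ a) (hxk k.succ b)
    _ = 2 ^ p := by simp

theorem sum_sq_hadamardForm_apply_e {p : ℕ} {a b : Fin (2 ^ p)} (hab : a ≠ b) (j₁ : Fin (2 ^ p)) :
    ∑ idx : Fin p → Fin (2 ^ p),
        |hadamardForm p a b (fun k => e _ (Fin.cons (α := fun _ => Fin (2 ^ p)) j₁ idx k))| ^ 2 =
      2 ^ p := by
  have h_sq : ∀ c : ℕ, (1 : ℝ) + ((-1) ^ c) ^ 2 = 2 := fun c => by
    rw [← pow_mul, mul_comm, pow_mul]; norm_num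
  rw [hadamardForm, sum_sq_sumProdForm_apply_e]
  simp only [LinearMap.add_apply, LinearMap.proj_apply, LinearMap.smul_apply, smul_eq_mul,
    sum_sq_e_apply_add_mul_e_apply hab, h_sq, prod_const, card_univ, Fintype.card_fin]

/-- Lower bound for the mixed `(ℓ₁,ℓ₂)`-Littlewood inequality with exponents
`(1,2,...,2)`: any `C` with
`Σ_{j₁≤n}(Σ_{j₂,...,j_m≤n}|T(e_{j₁},...,e_{j_m})|²)^{1/2} ≤ C‖T‖`
for all real `m`-linear forms (here `m = M + 2 ≥ 2`) satisfies
`C ≥ 2^{(m-1)/2}`. -/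
theorem stmt_9 (M : ℕ) (C : ℝ)
    (hC : ∀ n : ℕ, ∀ T : MultilinearMap ℝ (fun _ : Fin (M + 2) => (Fin n → ℝ)) ℝ,
      ∑ j₁ : Fin n, (∑ idx : Fin (M + 1) → Fin n,
          |T fun k => e n (Fin.cons (α := fun _ => Fin n) j₁ idx k)| ^ 2) ^ ((1:ℝ)/2)
        ≤ C * supNorm (M + 2) n T) :
    (2:ℝ) ^ (((M : ℝ) + 1) / 2) ≤ C := by
  set a : Fin (2 ^ (M + 1)) := ⟨0, by positivity⟩
  set b : Fin (2 ^ (M + 1)) := ⟨1, Nat.one_lt_two_pow (Nat.succ_ne_zero M)⟩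
  have hab : a ≠ b := by simp [a, b, Fin.ext_iff]
  have hroot : ((2 : ℝ) ^ (M + 1)) ^ ((1 : ℝ) / 2) = 2 ^ (((M : ℝ) + 1) / 2) := by
    rw [← Real.rpow_natCast, ← Real.rpow_mul (by norm_num)]
    push_cast
    ring_nf
  have hmixed := hC (2 ^ (M + 1)) (hadamardForm (M + 1) a b)
  simp only [sum_sq_hadamardForm_apply_e hab, sum_const, card_univ, Fintype.card_fin,
    nsmul_eq_mul, Nat.cast_pow, Nat.cast_ofNat, hroot] at hmixed
  have hnorm : supNorm (M + 2) (2 ^ (M + 1)) (hadamardForm (M + 1) a b) ≤ 2 ^ (M + 1) :=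
    supNorm_le fun x hx => abs_hadamardForm_le a b hx
  have hC_pos : 0 < C := pos_of_mul_pos_left (lt_of_lt_of_le (by positivity) hmixed) supNorm_nonneg
  nlinarith [mul_le_mul_of_nonneg_left hnorm hC_pos.le, pow_pos (two_pos (α := ℝ)) (M + 1)]
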